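/- Under assumption (★), let (R, μ) satisfy the pre-processing conditions. Then G has a stable matching if and only if there does not exist a critical hospital with respect to (R, μ); moreover, in that case μ itself is a stable matching in G. -/

import Mathlib

open Classical

variable {D H : Type}

def edgesD (E : Set (D × H)) (d : D) : Set (D × H) := {e ∈ E | e.1 = d}

def edgesH (E : Set (D × H)) (h : H) : Set (D × H) := {e ∈ E | e.2 = h}

def optD (E : Set (D × H)) (d : D) : Set (Option (D × H)) :=
  insert none (some '' edgesD E d)

def optH (E : Set (D × H)) (h : H) : Set (Option (D × H)) :=
  insert none (some '' edgesH E h)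

/-- An instance of the strongly stable matching problem with closures:
a bipartite graph between doctors `D` and hospitals `H` with edge set `E`,
a set `S` of closable hospitals, and for each vertex a transitive, total
preference relation on its incident edges together with `∅` (modelled by
`Option`, where `none` plays the role of `∅`), such that every incident
edge is strictly preferred to `∅`. -/
structure SSMC (D H : Type) where
  E : Set (D × H)
  S : Set H
  prefD : D → Option (D × H) → Option (D × H) → Prop
  prefH : H → Option (D × H) → Option (D × H) → Prop
  prefD_trans : ∀ d, ∀ e ∈ optD E d, ∀ f ∈ optD E d, ∀ g ∈ optD E d,
    prefD d e f → prefD d f g → prefD d e g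
  prefD_total : ∀ d, ∀ e ∈ optD E d, ∀ f ∈ optD E d, prefD d e f ∨ prefD d f e
  prefD_none : ∀ d, ∀ e ∈ edgesD E d, prefD d (some e) none ∧ ¬ prefD d none (some e)
  prefH_trans : ∀ h, ∀ e ∈ optH E h, ∀ f ∈ optH E h, ∀ g ∈ optH E h,
    prefH h e f → prefH h f g → prefH h e g
  prefH_total : ∀ h, ∀ e ∈ optH E h, ∀ f ∈ optH E h, prefH h e f ∨ prefH h f e
  prefH_none : ∀ h, ∀ e ∈ edgesH E h, prefH h (some e) none ∧ ¬ prefH h none (some e)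

namespace SSMC

variable (I : SSMC D H)

/-- `e ≻_d f` -/
def strictD (d : D) (e f : Option (D × H)) : Prop := I.prefD d e f ∧ ¬ I.prefD d f e

/-- `e ∼_d f` -/
def simD (d : D) (e f : Option (D × H)) : Prop := I.prefD d e f ∧ I.prefD d f e

/-- `e ≻_h f` -/
def strictH (h : H) (e f : Option (D × H)) : Prop := I.prefH h e f ∧ ¬ I.prefH h f e

/-- `e ∼_h f` -/
def simH (h : H) (e f : Option (D × H)) : Prop := I.prefH h e f ∧ I.prefH h f e

/-- A matching: a subset of `E` with at most one edge at each vertex. -/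
def isMatching (μ : Set (D × H)) : Prop :=
  μ ⊆ I.E ∧ (∀ e ∈ μ, ∀ f ∈ μ, e.1 = f.1 → e = f) ∧
    (∀ e ∈ μ, ∀ f ∈ μ, e.2 = f.2 → e = f)

end SSMC

/-- `μ(d)`: the edge of `μ` at doctor `d` (or `none`). -/
noncomputable def muD (μ : Set (D × H)) (d : D) : Option (D × H) :=
  if h : ∃ e, e ∈ μ ∧ e.1 = d then some h.choose else none

/-- `μ(h)`: the edge of `μ` at hospital `h` (or `none`). -/
noncomputable def muH (μ : Set (D × H)) (h : H) : Option (D × H) :=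
  if hh : ∃ e, e ∈ μ ∧ e.2 = h then some hh.choose else none

namespace SSMC

variable (I : SSMC D H)

/-- `e` blocks the matching `μ`: `e ∈ E \ μ`, `e` weakly blocks `μ` on both of its
endpoints and strongly blocks `μ` on at least one of them (where blocking on a
hospital `h ∈ S` additionally requires `μ(h) ≠ ∅`). -/
def blocks (μ : Set (D × H)) (e : D × H) : Prop :=
  e ∈ I.E ∧ e ∉ μ ∧
  I.prefD e.1 (some e) (muD μ e.1) ∧
  (I.prefH e.2 (some e) (muH μ e.2) ∧ (e.2 ∈ I.S → muH μ e.2 ≠ none)) ∧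
  (I.strictD e.1 (some e) (muD μ e.1) ∨
    (I.strictH e.2 (some e) (muH μ e.2) ∧ (e.2 ∈ I.S → muH μ e.2 ≠ none)))

/-- A stable matching: no edge blocks it. -/
def stable (μ : Set (D × H)) : Prop :=
  I.isMatching μ ∧ ∀ e, ¬ I.blocks μ e

/-- `Ch_D(F)`: union over doctors `d` of the most preferred edges of `F(d)`. -/
def ChD (F : Set (D × H)) : Set (D × H) :=
  {e ∈ F | ∀ f ∈ F, f.1 = e.1 → I.prefD e.1 (some e) (some f)}

/-- `Ch_H(F)`: union over hospitals `h` of the most preferred edges of `F(h)`. -/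
def ChH (F : Set (D × H)) : Set (D × H) :=
  {e ∈ F | ∀ f ∈ F, f.2 = e.2 → I.prefH e.2 (some e) (some f)}

/-- `Ch(F) = Ch_H(Ch_D(F))`. -/
def Ch (F : Set (D × H)) : Set (D × H) := I.ChH (I.ChD F)

/-- `e ≻_d F` for a flat set `F`. -/
def dSucc (F : Set (D × H)) (e : D × H) : Prop :=
  (∀ f ∈ F, f.1 ≠ e.1) ∨ ∃ f ∈ F, f.1 = e.1 ∧ I.strictD e.1 (some e) (some f)

/-- `e ∼_d F` for a flat set `F`. -/
def dSim (F : Set (D × H)) (e : D × H) : Prop :=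
  ∃ f ∈ F, f.1 = e.1 ∧ I.simD e.1 (some e) (some f)

/-- `block(F)` for a flat set `F ⊆ E`. -/
def setBlock (F : Set (D × H)) : Set (D × H) :=
  {e | e ∈ I.E ∧ e ∉ F ∧ (∃ f ∈ F, f.2 = e.2) ∧
    (I.dSucc F e ∨ I.dSim F e) ∧
    (I.dSucc F e → ∃ f ∈ F, f.2 = e.2 ∧ I.prefH e.2 (some e) (some f)) ∧
    (I.dSim F e → ∃ f ∈ F, f.2 = e.2 ∧ I.strictH e.2 (some e) (some f))}

/-- `L = Ch(E \ R)`. -/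
def Lset (R : Set (D × H)) : Set (D × H) := I.Ch (I.E \ R)

/-- The pre-processing conditions (R1)–(R5) on a pair `(R, μ)`. -/
def preproc (R μ : Set (D × H)) : Prop :=
  R ⊆ I.E ∧ I.isMatching μ ∧
  -- (R1)
  (∀ σ, I.stable σ → ∀ e ∈ R, e ∉ σ) ∧
  -- (R2)
  μ ⊆ I.Ch (I.E \ R) ∧
  -- (R3)
  (∀ d : D, (∃ e ∈ I.E \ R, e.1 = d) → ∃ e ∈ μ, e.1 = d) ∧
  -- (R4)
  R ∩ I.setBlock (I.Ch (I.E \ R)) = ∅ ∧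
  -- (R5)
  (∀ d : D, ∀ e ∈ R, e.1 = d → ∀ f ∈ I.E \ R, f.1 = d → I.prefD d (some e) (some f))

/-- `h` is a critical hospital with respect to `(R, μ)`. -/
def critical (R μ : Set (D × H)) (h : H) : Prop :=
  h ∉ I.S ∧ (∀ e ∈ μ, e.2 ≠ h) ∧
  ((∃ e ∈ I.Ch (I.E \ R), e.2 = h) ∨ (∃ e ∈ R, e.2 = h))

/-- Assumption (★): every doctor strictly prefers any acceptable hospital
outside `S` to any acceptable hospital in `S`. -/
def starAssumption : Prop :=
  ∀ (d : D) (h h' : H), (d, h) ∈ I.E → (d, h') ∈ I.E → h ∈ I.S → h' ∉ I.S →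
    I.strictD d (some (d, h')) (some (d, h))

end SSMC

/-! If no hospital is critical, `μ` is stable: by (R2) and (R3) every doctor weakly prefers
`μ(d)` to all edges outside `R`, so a blocking edge `e` can only block strictly on its
hospital `h`. If `h` is matched in `μ`, this contradicts the choice function `Ch` (when
`e ∉ R`) or (R4) (when `e ∈ R`); if `h` is unmatched, blocking forces `h ∉ S`, and `h` is
critical.

Conversely, let `σ` be stable and `h₀` critical. Stability forces every open hospital that is
weakly demanded against `σ` to be matched in `σ`; in particular `h₀` is. For an edge `x` of
`σ \ μ` at an open hospital, the `μ`-edge `f` of its doctor is weakly preferred to `x`, so by (★)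
`f` goes to an open hospital, which therefore carries an edge of `σ \ μ`. This map on the finite
set of edges of `σ \ μ` at open hospitals is injective, but misses the edge at `h₀`, which is
unmatched in `μ`. -/

lemma exists_forall_rel_of_total {α : Type*} {r : α → α → Prop} {s : Set α}
    (hs : s.Finite) (hne : s.Nonempty) (htotal : ∀ a ∈ s, ∀ b ∈ s, r a b ∨ r b a)
    (htrans : ∀ a ∈ s, ∀ b ∈ s, ∀ c ∈ s, r a b → r b c → r a c) :
    ∃ m ∈ s, ∀ b ∈ s, r m b := by
  obtain ⟨m, hm, hmax⟩ := hs.exists_maximalFor (fun a => {b ∈ s | r a b}) s hne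
  refine ⟨m, hm, fun b hb => ?_⟩
  rcases htotal m hm b hb with hmb | hbm
  · exact hmb
  · have hsub : {c ∈ s | r m c} ⊆ {c ∈ s | r b c} :=
      fun c hc => ⟨hc.1, htrans b hb m hm c hc.1 hbm hc.2⟩
    exact (hmax hb hsub ⟨hb, (htotal b hb b hb).elim id id⟩).2

lemma some_mem_optD {E : Set (D × H)} {e : D × H} {d : D} (he : e ∈ E) (hd : e.1 = d) :
    some e ∈ optD E d :=
  Set.mem_insert_of_mem _ ⟨e, ⟨he, hd⟩, rfl⟩

lemma some_mem_optH {E : Set (D × H)} {e : D × H} {h : H} (he : e ∈ E) (hh : e.2 = h) :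
    some e ∈ optH E h :=
  Set.mem_insert_of_mem _ ⟨e, ⟨he, hh⟩, rfl⟩

lemma muD_spec {μ : Set (D × H)} {d : D} {e : D × H} (he : muD μ d = some e) :
    e ∈ μ ∧ e.1 = d := by
  unfold muD at he
  split_ifs at he with hex
  cases he
  exact hex.choose_spec

lemma muH_spec {μ : Set (D × H)} {h : H} {e : D × H} (he : muH μ h = some e) :
    e ∈ μ ∧ e.2 = h := by
  unfold muH at he
  split_ifs at he with hex
  cases he
  exact hex.choose_spec

lemma muD_eq_some {μ : Set (D × H)} (hμ : ∀ e ∈ μ, ∀ f ∈ μ, e.1 = f.1 → e = f)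
    {e : D × H} (he : e ∈ μ) : muD μ e.1 = some e := by
  have hex : ∃ f, f ∈ μ ∧ f.1 = e.1 := ⟨e, he, rfl⟩
  rw [muD, dif_pos hex]
  exact congrArg some (hμ _ hex.choose_spec.1 _ he hex.choose_spec.2)

lemma muH_eq_some {μ : Set (D × H)} (hμ : ∀ e ∈ μ, ∀ f ∈ μ, e.2 = f.2 → e = f)
    {e : D × H} (he : e ∈ μ) : muH μ e.2 = some e := by
  have hex : ∃ f, f ∈ μ ∧ f.2 = e.2 := ⟨e, he, rfl⟩
  rw [muH, dif_pos hex]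
  exact congrArg some (hμ _ hex.choose_spec.1 _ he hex.choose_spec.2)

lemma muH_eq_none {μ : Set (D × H)} {h : H} (hne : ¬ ∃ e, e ∈ μ ∧ e.2 = h) :
    muH μ h = none :=
  dif_neg hne

lemma muD_mem_optD {E μ : Set (D × H)} (hμ : μ ⊆ E) (d : D) : muD μ d ∈ optD E d := by
  cases hm : muD μ d with
  | none => exact Set.mem_insert _ _
  | some e => exact some_mem_optD (hμ (muD_spec hm).1) (muD_spec hm).2

namespace SSMC

variable {I : SSMC D H} {R μ σ : Set (D × H)}

lemma exists_mem_ChH [Finite D] [Finite H] {F : Set (D × H)} (hF : F ⊆ I.E) {e : D × H}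
    (he : e ∈ F) : ∃ m ∈ I.ChH F, m.2 = e.2 := by
  have hsub : ∀ f ∈ {f ∈ F | f.2 = e.2}, some f ∈ optH I.E e.2 :=
    fun f hf => some_mem_optH (hF hf.1) hf.2
  obtain ⟨m, ⟨hmF, hme⟩, hmax⟩ := exists_forall_rel_of_total
    (r := fun f g => I.prefH e.2 (some f) (some g)) (s := {f ∈ F | f.2 = e.2})
    (Set.toFinite _) ⟨e, he, rfl⟩
    (fun f hf g hg => I.prefH_total _ _ (hsub f hf) _ (hsub g hg))
    (fun f hf g hg k hk => I.prefH_trans _ _ (hsub f hf) _ (hsub g hg) _ (hsub k hk))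
  exact ⟨m, ⟨hmF, fun f hf hfm => hme ▸ hmax f ⟨hf, hfm.trans hme⟩⟩, hme⟩

lemma prefD_refl {d : D} {e : Option (D × H)} (he : e ∈ optD I.E d) : I.prefD d e e :=
  (I.prefD_total d e he e he).elim id id

lemma dSucc_or_dSim_of_forall_prefD {F : Set (D × H)} {e : D × H}
    (hpref : ∀ f ∈ F, f.1 = e.1 → I.prefD e.1 (some e) (some f)) :
    I.dSucc F e ∨ I.dSim F e := by
  by_cases hex : ∃ f ∈ F, f.1 = e.1
  · obtain ⟨f, hf, hfe⟩ := hex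
    by_cases hfe' : I.prefD e.1 (some f) (some e)
    · exact Or.inr ⟨f, hf, hfe, hpref f hf hfe, hfe'⟩
    · exact Or.inl (Or.inr ⟨f, hf, hfe, hpref f hf hfe, hfe'⟩)
  · exact Or.inl (Or.inl fun f hf hfe => hex ⟨f, hf, hfe⟩)

lemma prefD_muD_of_forall {x : D × H} (hx : x ∈ I.E)
    (hpref : ∀ y ∈ σ, y.1 = x.1 → I.prefD x.1 (some x) (some y)) :
    I.prefD x.1 (some x) (muD σ x.1) := by
  cases hm : muD σ x.1 with
  | none => exact (I.prefD_none x.1 x ⟨hx, rfl⟩).1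
  | some y => exact hpref y (muD_spec hm).1 (muD_spec hm).2

lemma stable.exists_mem_of_prefD (hσ : I.stable σ) {x : D × H} (hx : x ∈ I.E) (hxS : x.2 ∉ I.S)
    (hpref : I.prefD x.1 (some x) (muD σ x.1)) : ∃ y ∈ σ, y.2 = x.2 := by
  by_contra hex
  have hmuH : muH σ x.2 = none := muH_eq_none hex
  have hnone := I.prefH_none x.2 x ⟨hx, rfl⟩
  refine hσ.2 x ⟨hx, fun hxσ => hex ⟨x, hxσ, rfl⟩, hpref, ⟨?_, fun hS => (hxS hS).elim⟩,
    Or.inr ⟨?_, fun hS => (hxS hS).elim⟩⟩ <;> rw [hmuH]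
  · exact hnone.1
  · exact hnone

namespace preproc

lemma muD_prefD (hpre : I.preproc R μ) {f : D × H} {d : D} (hf : f ∈ I.E \ R) (hfd : f.1 = d) :
    I.prefD d (muD μ d) (some f) := by
  have ⟨_, ⟨_, hμd, _⟩, _, hR2, hR3, _, _⟩ := hpre
  obtain ⟨g, hgμ, hgd⟩ := hR3 d ⟨f, hf, hfd⟩
  rw [← hgd, muD_eq_some hμd hgμ]
  exact (hR2 hgμ).1.2 f hf (hfd.trans hgd.symm)

lemma not_strictD_muD (hpre : I.preproc R μ) {e f : D × H} (he : e ∈ I.E) (hf : f ∈ I.E \ R)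
    (hfe : f.1 = e.1) (hpref : I.prefD e.1 (some f) (some e)) :
    ¬ I.strictD e.1 (some e) (muD μ e.1) :=
  fun hstrict => hstrict.2 (I.prefD_trans _ _ (muD_mem_optD hpre.2.1.1 _) _
    (some_mem_optD hf.1 hfe) _ (some_mem_optD he rfl) (hpre.muD_prefD hf hfe) hpref)

lemma mem_ChD_of_blocks (hpre : I.preproc R μ) {e : D × H} (he : e ∈ I.E \ R)
    (hb : I.blocks μ e) : e ∈ I.ChD (I.E \ R) :=
  ⟨he, fun _ hf hfe => I.prefD_trans _ _ (some_mem_optD he.1 rfl) _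
    (muD_mem_optD hpre.2.1.1 _) _ (some_mem_optD hf.1 hfe) hb.2.2.1 (hpre.muD_prefD hf hfe)⟩

lemma mem_setBlock_of_blocks (hpre : I.preproc R μ) {e m : D × H} (heR : e ∈ R) (hmμ : m ∈ μ)
    (hme : m.2 = e.2) (hb : I.blocks μ e) : e ∈ I.setBlock (I.Ch (I.E \ R)) := by
  have ⟨_, ⟨_, _, hμh⟩, _, hR2, _, _, hR5⟩ := hpre
  have hmuH : muH μ e.2 = some m := hme ▸ muH_eq_some hμh hmμ
  obtain ⟨heE, -, -, ⟨hweak, -⟩, hstrict⟩ := hb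
  rw [hmuH] at hweak hstrict
  refine ⟨heE, fun heL => heL.1.1.2 heR, ⟨m, hR2 hmμ, hme⟩,
    dSucc_or_dSim_of_forall_prefD fun f hf hfe => hR5 _ e heR rfl f hf.1.1 hfe,
    fun _ => ⟨m, hR2 hmμ, hme, hweak⟩, fun ⟨_, hfL, hfe, hsim⟩ => ⟨m, hR2 hmμ, hme, ?_⟩⟩
  exact (hstrict.resolve_left (hpre.not_strictD_muD heE hfL.1.1 hfe hsim.2)).1

lemma stable_of_not_critical [Finite D] [Finite H] (hpre : I.preproc R μ)
    (hnc : ¬ ∃ h, I.critical R μ h) : I.stable μ := by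
  have ⟨_, hμ, _, hR2, _, hR4, _⟩ := hpre
  refine ⟨hμ, fun e hb => ?_⟩
  have ⟨heE, _, _, ⟨_, hclosed⟩, hstrict⟩ := hb
  cases hm : muH μ e.2 with
  | none =>
    refine hnc ⟨e.2, fun hS => hclosed hS hm, fun f hf hfe => ?_, ?_⟩
    · rw [← hfe, muH_eq_some hμ.2.2 hf] at hm
      cases hm
    · by_cases heR : e ∈ R
      · exact Or.inr ⟨e, heR, rfl⟩
      · exact Or.inl (exists_mem_ChH (fun f hf => hf.1.1)
          (hpre.mem_ChD_of_blocks ⟨heE, heR⟩ hb))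
  | some m =>
    obtain ⟨hmμ, hme⟩ := muH_spec hm
    by_cases heR : e ∈ R
    · exact hR4.subset ⟨heR, hpre.mem_setBlock_of_blocks heR hmμ hme hb⟩
    · have heChD := hpre.mem_ChD_of_blocks ⟨heE, heR⟩ hb
      have hstrictH := (hstrict.resolve_left <| hpre.not_strictD_muD heE ⟨heE, heR⟩ rfl
        (I.prefD_refl (some_mem_optD heE rfl))).1
      rw [hm] at hstrictH
      exact hstrictH.2 (hme ▸ (hR2 hmμ).2 e heChD hme.symm)

lemma prefD_muD_of_stable (hpre : I.preproc R μ) (hσ : I.stable σ) {e : D × H}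
    (he : e ∈ I.ChD (I.E \ R) ∨ e ∈ R) : I.prefD e.1 (some e) (muD σ e.1) := by
  have ⟨hRE, _, hR1, _, _, _, hR5⟩ := hpre
  have hσER : ∀ y ∈ σ, y ∈ I.E \ R := fun y hy => ⟨hσ.1.1 hy, fun hyR => hR1 σ hσ y hyR hy⟩
  rcases he with he | he
  · exact prefD_muD_of_forall he.1.1 fun y hy hye => he.2 y (hσER y hy) hye
  · exact prefD_muD_of_forall (hRE he) fun y hy hye => hR5 _ e he rfl y (hσER y hy) hye

lemma exists_mem_of_critical (hpre : I.preproc R μ) (hσ : I.stable σ) {h : H}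
    (hc : I.critical R μ h) : ∃ x ∈ σ, x.2 = h := by
  obtain ⟨hS, -, hdemand⟩ := hc
  obtain ⟨e, he, rfl⟩ : ∃ e, (e ∈ I.ChD (I.E \ R) ∨ e ∈ R) ∧ e.2 = h := by
    rcases hdemand with ⟨e, he, heh⟩ | ⟨e, he, heh⟩
    exacts [⟨e, Or.inl he.1, heh⟩, ⟨e, Or.inr he, heh⟩]
  exact hσ.exists_mem_of_prefD (he.elim (·.1.1) (hpre.1 ·)) hS
    (hpre.prefD_muD_of_stable hσ he)

lemma exists_alternating_step (hstar : I.starAssumption) (hpre : I.preproc R μ) (hσ : I.stable σ)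
    {x : D × H} (hxσ : x ∈ σ) (hxμ : x ∉ μ) (hxS : x.2 ∉ I.S) :
    ∃ y, (y ∈ σ ∧ y ∉ μ ∧ y.2 ∉ I.S) ∧ ∃ f ∈ μ, f.1 = x.1 ∧ f.2 = y.2 := by
  have ⟨_, ⟨_, _, hμh⟩, hR1, hR2, hR3, _, _⟩ := hpre
  have ⟨⟨hσE, hσd, _⟩, _⟩ := hσ
  have hxER : x ∈ I.E \ R := ⟨hσE hxσ, fun hxR => hR1 σ hσ x hxR hxσ⟩
  obtain ⟨f, hfμ, hfx⟩ := hR3 x.1 ⟨x, hxER, rfl⟩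
  have hfChD : f ∈ I.ChD (I.E \ R) := (hR2 hfμ).1
  have hfS : f.2 ∉ I.S := by
    intro hfS
    have hf : f = (x.1, f.2) := Prod.ext hfx rfl
    have hstrict := hstar x.1 f.2 x.2 (hf ▸ hfChD.1.1) hxER.1 hfS hxS
    have hfx_pref : I.prefD x.1 (some f) (some x) := hfx ▸ hfChD.2 x hxER hfx.symm
    rw [← hf] at hstrict
    exact hstrict.2 hfx_pref
  have hfσ : f ∉ σ := fun hfσ => hxμ (hσd f hfσ x hxσ hfx ▸ hfμ)
  obtain ⟨y, hyσ, hyf⟩ :=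
    hσ.exists_mem_of_prefD hfChD.1.1 hfS (hpre.prefD_muD_of_stable hσ (Or.inl hfChD))
  exact ⟨y, ⟨hyσ, fun hyμ => hfσ (hμh y hyμ f hfμ hyf ▸ hyσ), hyf ▸ hfS⟩, f, hfμ, hfx, hyf.symm⟩

lemma not_critical_of_stable [Finite D] [Finite H] (hstar : I.starAssumption)
    (hpre : I.preproc R μ) (hσ : I.stable σ) : ¬ ∃ h, I.critical R μ h := by
  have ⟨⟨_, hσd, _⟩, _⟩ := hσ
  have ⟨_, _, hμh⟩ := hpre.2.1
  rintro ⟨h₀, hS₀, hμ₀, hdemand⟩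
  obtain ⟨x₀, hx₀σ, hx₀⟩ := hpre.exists_mem_of_critical hσ ⟨hS₀, hμ₀, hdemand⟩
  choose next hnext hlink using fun x : {x // x ∈ σ ∧ x ∉ μ ∧ x.2 ∉ I.S} =>
    hpre.exists_alternating_step hstar hσ x.2.1 x.2.2.1 x.2.2.2
  let φ : {x // x ∈ σ ∧ x ∉ μ ∧ x.2 ∉ I.S} → {x // x ∈ σ ∧ x ∉ μ ∧ x.2 ∉ I.S} :=
    fun x => ⟨next x, hnext x⟩
  have hinj : φ.Injective := by
    intro x x' hxx'
    obtain ⟨f, hfμ, hfx, hfn⟩ := hlink x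
    obtain ⟨f', hf'μ, hf'x, hf'n⟩ := hlink x'
    have hff' : f = f' := hμh f hfμ f' hf'μ
      (by rw [hfn, hf'n]; exact congrArg (·.1.2) hxx')
    exact Subtype.ext (hσd _ x.2.1 _ x'.2.1 (by rw [← hfx, ← hf'x, hff']))
  obtain ⟨x, hx⟩ := Finite.injective_iff_surjective.mp hinj
    ⟨x₀, hx₀σ, fun hx₀μ => hμ₀ x₀ hx₀μ hx₀, hx₀ ▸ hS₀⟩
  obtain ⟨f, hfμ, -, hfn⟩ := hlink x
  exact hμ₀ f hfμ (hfn.trans ((congrArg (·.1.2) hx).trans hx₀))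

end preproc

end SSMC

/-- under assumption (★), for a pair `(R, μ)` satisfying the
pre-processing conditions, `G` has a stable matching iff there is no critical
hospital with respect to `(R, μ)`, in which case `μ` itself is stable. -/
theorem stable_iff_no_critical {D H : Type} [Fintype D] [Fintype H]
    (I : SSMC D H) (hstar : I.starAssumption)
    (R μ : Set (D × H)) (hpre : I.preproc R μ) :
    ((∃ σ : Set (D × H), I.stable σ) ↔ ¬ ∃ h : H, I.critical R μ h) ∧
      ((¬ ∃ h : H, I.critical R μ h) → I.stable μ) :=
  ⟨⟨fun ⟨_, hσ⟩ => hpre.not_critical_of_stable hstar hσ,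
    fun hnc => ⟨μ, hpre.stable_of_not_critical hnc⟩⟩, hpre.stable_of_not_critical⟩
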